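/- Suppose m = l. A subset X ⊆ L_{mkl} with D(X) < D(L_{mkl}) has maximum cardinality if and only if for every x ∈ L_{mkl}, exactly one of x and -x belongs to X. -/

import Mathlib

open scoped Classical

/-- `L m k l` is the set of vectors in `ℝ^(m+k+l)` with exactly `m` entries `-1`,
`k` entries `0`, and `l` entries `1`. -/
def L (m k l : ℕ) : Set (EuclideanSpace ℝ (Fin (m+k+l))) :=
  {x | (Finset.univ.filter (fun i => x i = (-1:ℝ))).card = m ∧
       (Finset.univ.filter (fun i => x i = (0:ℝ))).card = k ∧
       (Finset.univ.filter (fun i => x i = (1:ℝ))).card = l}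

section Aux

lemma L_univ_eq {m k l : ℕ} {x : EuclideanSpace ℝ (Fin (m+k+l))} (hx : x ∈ L m k l) :
    (Finset.univ.filter (fun i => x i = (-1:ℝ))) ∪ (Finset.univ.filter (fun i => x i = (0:ℝ)))
      ∪ (Finset.univ.filter (fun i => x i = (1:ℝ))) = Finset.univ := by
  obtain ⟨h1, h2, h3⟩ := hx
  apply Finset.eq_univ_of_card
  have d1 : Disjoint (Finset.univ.filter (fun i => x i = (-1:ℝ)))
      (Finset.univ.filter (fun i => x i = (0:ℝ))) := by
    simp [Finset.disjoint_left, Finset.mem_filter]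
    intro a ha; rw [ha]; norm_num
  have d2 : Disjoint ((Finset.univ.filter (fun i => x i = (-1:ℝ))) ∪
      (Finset.univ.filter (fun i => x i = (0:ℝ))))
      (Finset.univ.filter (fun i => x i = (1:ℝ))) := by
    simp [Finset.disjoint_left, Finset.mem_filter]
    intro a ha; rcases ha with h | h <;> rw [h] <;> norm_num
  rw [Finset.card_union_of_disjoint d2, Finset.card_union_of_disjoint d1, h1, h2, h3]
  simp

lemma L_entries {m k l : ℕ} {x : EuclideanSpace ℝ (Fin (m+k+l))} (hx : x ∈ L m k l)
    (i : Fin (m+k+l)) : x i = -1 ∨ x i = 0 ∨ x i = 1 := by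
  have := L_univ_eq hx
  have hi : i ∈ (Finset.univ : Finset (Fin (m+k+l))) := Finset.mem_univ i
  rw [← this] at hi
  simpa using hi

lemma neg_apply' {m k l : ℕ} (x : EuclideanSpace ℝ (Fin (m+k+l))) (i : Fin (m+k+l)) :
    (-x) i = -(x i) := rfl

lemma L_neg_mem {m k : ℕ} {x : EuclideanSpace ℝ (Fin (m+k+m))} (hx : x ∈ L m k m) :
    -x ∈ L m k m := by
  obtain ⟨h1, h2, h3⟩ := hx
  refine ⟨?_, ?_, ?_⟩
  · have e : (Finset.univ.filter (fun i => (-x) i = (-1:ℝ))) =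
        (Finset.univ.filter (fun i => x i = (1:ℝ))) := by
      apply Finset.filter_congr; intro i _; rw [neg_apply']; constructor <;> intro h <;> linarith
    rw [e]; exact h3
  · have e : (Finset.univ.filter (fun i => (-x) i = (0:ℝ))) =
        (Finset.univ.filter (fun i => x i = (0:ℝ))) := by
      apply Finset.filter_congr; intro i _; rw [neg_apply']; constructor <;> intro h <;> linarith
    rw [e]; exact h2
  · have e : (Finset.univ.filter (fun i => (-x) i = (1:ℝ))) =
        (Finset.univ.filter (fun i => x i = (-1:ℝ))) := by
      apply Finset.filter_congr; intro i _; rw [neg_apply']; constructor <;> intro h <;> linarith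
    rw [e]; exact h1

lemma L_finite (m k l : ℕ) : (L m k l).Finite := by
  have : (L m k l) ⊆ WithLp.toLp 2 '' (Set.pi Set.univ (fun _ : Fin (m+k+l) => ({-1, 0, 1} : Set ℝ))) := by
    intro x hx
    refine ⟨x.ofLp, fun i _ => ?_, rfl⟩
    simpa using L_entries hx i
  exact Set.Finite.subset ((Set.Finite.pi (fun _ => by
    exact (Set.finite_singleton (1:ℝ)).insert 0 |>.insert (-1))).image _) this

lemma L_ne_neg {m k : ℕ} (hm : 0 < m) {x : EuclideanSpace ℝ (Fin (m+k+m))}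
    (hx : x ∈ L m k m) : x ≠ -x := by
  intro h
  have hpos : 0 < (Finset.univ.filter (fun i => x i = (-1:ℝ))).card := by rw [hx.1]; exact hm
  obtain ⟨i, hi⟩ := Finset.card_pos.mp hpos
  simp only [Finset.mem_filter, Finset.mem_univ, true_and] at hi
  have h2 : x i = (-x) i := by rw [← h]
  rw [neg_apply', hi] at h2
  norm_num at h2

lemma L_witness (m k : ℕ) (hm : 0 < m) (hk : 0 < k) :
    WithLp.toLp 2 (fun i : Fin (m+k+m) => if (i:ℕ) < m then (-1:ℝ) else if (i:ℕ) < m+k then 0 else 1)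
      ∈ L m k m := by
  set w : EuclideanSpace ℝ (Fin (m+k+m)) :=
    WithLp.toLp 2 (fun i : Fin (m+k+m) => if (i:ℕ) < m then (-1:ℝ) else if (i:ℕ) < m+k then 0 else 1) with hw
  have e1 : (Finset.univ.filter (fun i => w i = (-1:ℝ)))
      = Finset.Iio (⟨m, by omega⟩ : Fin (m+k+m)) := by
    ext i
    simp only [Finset.mem_filter, Finset.mem_univ, true_and, Finset.mem_Iio, Fin.lt_def, hw, WithLp.ofLp_toLp]
    split_ifs with h1 h2 <;> norm_num <;> omega
  have e2 : (Finset.univ.filter (fun i => w i = (0:ℝ))) =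
      Finset.Ico (⟨m, by omega⟩ : Fin (m+k+m)) ⟨m+k, by omega⟩ := by
    ext i
    simp only [Finset.mem_filter, Finset.mem_univ, true_and, Finset.mem_Ico, Fin.lt_def,
      Fin.le_def, hw, WithLp.ofLp_toLp]
    split_ifs with h1 h2 <;> norm_num <;> omega
  have e3 : (Finset.univ.filter (fun i => w i = (1:ℝ))) =
      Finset.Ici (⟨m+k, by omega⟩ : Fin (m+k+m)) := by
    ext i
    simp only [Finset.mem_filter, Finset.mem_univ, true_and, Finset.mem_Ici, Fin.le_def, hw, WithLp.ofLp_toLp]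
    split_ifs with h1 h2 <;> norm_num <;> omega
  refine ⟨?_, ?_, ?_⟩
  · rw [e1, Fin.card_Iio]
  · rw [e2, Fin.card_Ico]; simp only [Fin.val_mk]; omega
  · rw [e3, Fin.card_Ici]; simp

lemma L_sum_sq {m k : ℕ} {x : EuclideanSpace ℝ (Fin (m+k+m))} (hx : x ∈ L m k m) :
    ∑ i, (x i)^2 = 2*m := by
  obtain ⟨h1, h2, h3⟩ := hx
  have key : ∀ i ∈ Finset.univ,
      (x i)^2 = (if x i = (-1:ℝ) then 1 else 0) + (if x i = (1:ℝ) then 1 else 0) := by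
    intro i _
    rcases L_entries ⟨h1,h2,h3⟩ i with h | h | h <;> rw [h] <;> norm_num
  rw [Finset.sum_congr rfl key, Finset.sum_add_distrib, Finset.sum_boole, Finset.sum_boole]
  simp [h1, h3]; ring

lemma L_inner_ge {m k : ℕ} {x y : EuclideanSpace ℝ (Fin (m+k+m))}
    (hx : x ∈ L m k m) (hy : y ∈ L m k m) :
    -(2*m) ≤ ∑ i, x i * y i := by
  have pt : ∀ i ∈ Finset.univ, -((x i)^2) ≤ x i * y i := by
    intro i _
    rcases L_entries hx i with h | h | h <;> rcases L_entries hy i with h' | h' | h' <;>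
      rw [h, h'] <;> norm_num
  have h := Finset.sum_le_sum pt
  have e : ∑ i, -((x i)^2) = -(2*(m:ℝ)) := by rw [Finset.sum_neg_distrib, L_sum_sq hx]
  rw [e] at h
  exact h

lemma L_inner_eq {m k : ℕ} {x y : EuclideanSpace ℝ (Fin (m+k+m))}
    (hx : x ∈ L m k m) (hy : y ∈ L m k m) (hS : ∑ i, x i * y i = -(2*m)) :
    y = -x := by
  have hpt : ∀ i, x i * y i = -((x i)^2) := by
    have hsum : ∑ i, (x i * y i + (x i)^2) = 0 := by
      rw [Finset.sum_add_distrib, hS, L_sum_sq hx]; ring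
    have hnn : ∀ i ∈ Finset.univ, (0:ℝ) ≤ x i * y i + (x i)^2 := by
      intro i _
      rcases L_entries hx i with h | h | h <;> rcases L_entries hy i with h' | h' | h' <;>
        rw [h, h'] <;> norm_num
    intro i
    have := (Finset.sum_eq_zero_iff_of_nonneg hnn).mp hsum i (Finset.mem_univ i)
    linarith
  have sub1 : (Finset.univ.filter (fun i => x i = (-1:ℝ))) ⊆
      (Finset.univ.filter (fun i => y i = (1:ℝ))) := by
    intro i hi
    simp only [Finset.mem_filter, Finset.mem_univ, true_and] at hi ⊢
    have := hpt i; rw [hi] at this; linarith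
  have sub2 : (Finset.univ.filter (fun i => x i = (1:ℝ))) ⊆
      (Finset.univ.filter (fun i => y i = (-1:ℝ))) := by
    intro i hi
    simp only [Finset.mem_filter, Finset.mem_univ, true_and] at hi ⊢
    have := hpt i; rw [hi] at this; linarith
  have eq1 : (Finset.univ.filter (fun i => x i = (-1:ℝ))) =
      (Finset.univ.filter (fun i => y i = (1:ℝ))) :=
    Finset.eq_of_subset_of_card_le sub1 (by rw [hx.1, hy.2.2])
  have eq2 : (Finset.univ.filter (fun i => x i = (1:ℝ))) =
      (Finset.univ.filter (fun i => y i = (-1:ℝ))) :=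
    Finset.eq_of_subset_of_card_le sub2 (by rw [hx.2.2, hy.1])
  ext i
  show y i = -(x i)
  rcases L_entries hx i with h | h | h
  · have := hpt i; rw [h] at this ⊢; norm_num; linarith
  · rw [h]
    rcases L_entries hy i with h' | h' | h'
    · exfalso
      have : i ∈ (Finset.univ.filter (fun i => x i = (1:ℝ))) := by
        rw [eq2]; simp [h']
      simp only [Finset.mem_filter] at this
      rw [h] at this; norm_num at this
    · rw [h']; norm_num
    · exfalso
      have : i ∈ (Finset.univ.filter (fun i => x i = (-1:ℝ))) := by
        rw [eq1]; simp [h']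
      simp only [Finset.mem_filter] at this
      rw [h] at this; norm_num at this
  · have := hpt i; rw [h] at this ⊢; linarith

lemma L_inner_ge' {m k : ℕ} {x y : EuclideanSpace ℝ (Fin (m+k+m))}
    (hx : x ∈ L m k m) (hy : y ∈ L m k m) (hne : y ≠ -x) :
    -(2*m) + 1 ≤ ∑ i, x i * y i := by
  set z : Fin (m+k+m) → ℤ := fun i =>
    if x i * y i = -1 then -1 else if x i * y i = 1 then 1 else 0 with hzdef
  have hzz : ∀ i, x i * y i = ((z i : ℤ) : ℝ) := by
    intro i
    rcases L_entries hx i with h | h | h <;> rcases L_entries hy i with h' | h' | h' <;>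
      simp [hzdef, h, h'] <;> norm_num
  have hsum : ∑ i, x i * y i = ((∑ i, z i : ℤ) : ℝ) := by
    push_cast
    exact Finset.sum_congr rfl (fun i _ => hzz i)
  have hge : -(2*(m:ℤ)) ≤ ∑ i, z i := by
    have := L_inner_ge hx hy
    rw [hsum] at this
    exact_mod_cast this
  have hne' : ∑ i, z i ≠ -(2*(m:ℤ)) := by
    intro h
    apply hne
    apply L_inner_eq hx hy
    rw [hsum, h]; push_cast; ring
  have : -(2*(m:ℤ)) + 1 ≤ ∑ i, z i := by omega
  rw [hsum]
  exact_mod_cast this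

lemma dist_eq_sqrt' {n : ℕ} (x y : EuclideanSpace ℝ (Fin n)) :
    dist x y = Real.sqrt (∑ i, (x i - y i)^2) := by
  rw [EuclideanSpace.dist_eq]
  congr 1
  apply Finset.sum_congr rfl
  intro i _
  rw [Real.dist_eq, sq_abs]

lemma L_dist_expand {m k : ℕ} {x y : EuclideanSpace ℝ (Fin (m+k+m))}
    (hx : x ∈ L m k m) (hy : y ∈ L m k m) :
    ∑ i, (x i - y i)^2 = 4*m - 2 * ∑ i, x i * y i := by
  have : ∑ i, (x i - y i)^2 = ∑ i, (x i)^2 + ∑ i, (y i)^2 - 2 * ∑ i, x i * y i := by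
    rw [Finset.mul_sum, ← Finset.sum_add_distrib, ← Finset.sum_sub_distrib]
    apply Finset.sum_congr rfl
    intros; ring
  rw [this, L_sum_sq hx, L_sum_sq hy]; ring

lemma L_dist_neg {m k : ℕ} {x : EuclideanSpace ℝ (Fin (m+k+m))} (hx : x ∈ L m k m) :
    dist x (-x) = Real.sqrt (8*m) := by
  rw [dist_eq_sqrt']
  congr 1
  have : ∀ i : Fin (m+k+m), (x i - (-x) i)^2 = 4 * (x i)^2 := by
    intro i; show (x i - (-(x i)))^2 = _; ring
  rw [Finset.sum_congr rfl (fun i _ => this i), ← Finset.mul_sum, L_sum_sq hx]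
  ring

lemma L_dist_le {m k : ℕ} {x y : EuclideanSpace ℝ (Fin (m+k+m))}
    (hx : x ∈ L m k m) (hy : y ∈ L m k m) :
    dist x y ≤ Real.sqrt (8*m) := by
  rw [dist_eq_sqrt']
  apply Real.sqrt_le_sqrt
  rw [L_dist_expand hx hy]
  have := L_inner_ge hx hy
  linarith

lemma L_dist_le' {m k : ℕ} {x y : EuclideanSpace ℝ (Fin (m+k+m))}
    (hx : x ∈ L m k m) (hy : y ∈ L m k m) (hne : y ≠ -x) :
    dist x y ≤ Real.sqrt (8*m - 2) := by
  rw [dist_eq_sqrt']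
  apply Real.sqrt_le_sqrt
  rw [L_dist_expand hx hy]
  have := L_inner_ge' hx hy hne
  linarith

lemma L_diam_le (m k : ℕ) : Metric.diam (L m k m) ≤ Real.sqrt (8*m) :=
  Metric.diam_le_of_forall_dist_le (Real.sqrt_nonneg _)
    (fun _ hx _ hy => L_dist_le hx hy)

lemma L_diam_ge (m k : ℕ) (hm : 0 < m) (hk : 0 < k) :
    Real.sqrt (8*m) ≤ Metric.diam (L m k m) := by
  have hw := L_witness m k hm hk
  have hw' := L_neg_mem hw
  have := Metric.dist_le_diam_of_mem ((L_finite m k m).isBounded) hw hw'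
  rwa [L_dist_neg hw] at this

/-- The key characterization: a subset of `L m k m` has diameter less than that of
`L m k m` iff it contains no antipodal pair. -/
lemma L_free_iff {m k : ℕ} (hm : 0 < m) (hk : 0 < k)
    {Y : Set (EuclideanSpace ℝ (Fin (m+k+m)))} (hY : Y ⊆ L m k m) :
    Metric.diam Y < Metric.diam (L m k m) ↔ ∀ y ∈ Y, -y ∉ Y := by
  constructor
  · intro hlt y hy hny
    have hb : Bornology.IsBounded Y := ((L_finite m k m).subset hY).isBounded
    have h1 : dist y (-y) ≤ Metric.diam Y := Metric.dist_le_diam_of_mem hb hy hny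
    rw [L_dist_neg (hY hy)] at h1
    have h2 := L_diam_le m k
    linarith
  · intro hfree
    have hle : Metric.diam Y ≤ Real.sqrt (8*m - 2) := by
      apply Metric.diam_le_of_forall_dist_le (Real.sqrt_nonneg _)
      intro a ha b hb
      apply L_dist_le' (hY ha) (hY hb)
      intro h
      rw [h] at hb
      exact hfree a ha hb
    have hlt : Real.sqrt (8*m - 2) < Real.sqrt (8*m) := by
      apply Real.sqrt_lt_sqrt
      · have : (1:ℝ) ≤ m := by exact_mod_cast hm
        linarith
      · linarith
    have := L_diam_ge m k hm hk
    linarith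

end Aux

theorem stmt_4 (m k : ℕ) (hm : 0 < m) (hk : 0 < k)
    (X : Set (EuclideanSpace ℝ (Fin (m+k+m)))) (hX : X ⊆ L m k m)
    (hD : Metric.diam X < Metric.diam (L m k m)) :
    (∀ Y ⊆ L m k m, Metric.diam Y < Metric.diam (L m k m) → Y.ncard ≤ X.ncard) ↔
      (∀ x ∈ L m k m, (x ∈ X ↔ -x ∉ X)) := by
  have hXfree : ∀ y ∈ X, -y ∉ X := (L_free_iff hm hk hX).mp hD
  have hXfin : X.Finite := (L_finite m k m).subset hX
  constructor
  · -- maximality implies exactly one of each antipodal pair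
    intro H x hxL
    constructor
    · intro hxX; exact hXfree x hxX
    · intro hnx
      by_contra hxX
      -- consider X ∪ {x}
      set Y : Set (EuclideanSpace ℝ (Fin (m+k+m))) := insert x X with hYdef
      have hYL : Y ⊆ L m k m := by
        intro z hz
        rcases hz with rfl | hz
        · exact hxL
        · exact hX hz
      have hYfree : ∀ y ∈ Y, -y ∉ Y := by
        intro y hy hny
        rcases hy with rfl | hy
        · rcases hny with h | h
          · exact (L_ne_neg hm hxL) h.symm
          · exact hnx h
        · rcases hny with h | h
          · exact hnx (by rwa [show y = -x from by rw [← h, neg_neg]] at hy)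
          · exact hXfree y hy h
      have hYd : Metric.diam Y < Metric.diam (L m k m) := (L_free_iff hm hk hYL).mpr hYfree
      have hle := H Y hYL hYd
      have hcard : Y.ncard = X.ncard + 1 := Set.ncard_insert_of_notMem hxX hXfin
      omega
  · -- exactly one of each pair implies maximality
    intro hsel Y hYL hYd
    have hYfree : ∀ y ∈ Y, -y ∉ Y := (L_free_iff hm hk hYL).mp hYd
    have hYfin : Y.Finite := (L_finite m k m).subset hYL
    have hLfin := L_finite m k m
    -- Y together with -Y is a disjoint subset of L
    have himgY : (Neg.neg '' Y).ncard = Y.ncard :=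
      Set.ncard_image_of_injective Y neg_injective
    have hdisjY : Disjoint Y (Neg.neg '' Y) := by
      rw [Set.disjoint_left]
      rintro z hz ⟨y, hy, rfl⟩
      exact hYfree (-y) hz (by rwa [neg_neg])
    have hunionY : Y ∪ (Neg.neg '' Y) ⊆ L m k m := by
      intro z hz
      rcases hz with hz | ⟨y, hy, rfl⟩
      · exact hYL hz
      · exact L_neg_mem (hYL hy)
    have hY2 : 2 * Y.ncard ≤ (L m k m).ncard := by
      have := Set.ncard_union_eq hdisjY hYfin (hYfin.image _)
      have hle := Set.ncard_le_ncard hunionY hLfin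
      omega
    -- X together with -X equals L
    have himgX : (Neg.neg '' X).ncard = X.ncard :=
      Set.ncard_image_of_injective X neg_injective
    have hdisjX : Disjoint X (Neg.neg '' X) := by
      rw [Set.disjoint_left]
      rintro z hz ⟨y, hy, rfl⟩
      exact hXfree (-y) hz (by rwa [neg_neg])
    have hunionX : X ∪ (Neg.neg '' X) = L m k m := by
      apply Set.Subset.antisymm
      · intro z hz
        rcases hz with hz | ⟨y, hy, rfl⟩
        · exact hX hz
        · exact L_neg_mem (hX hy)
      · intro z hz
        by_cases hzX : z ∈ X
        · exact Or.inl hzX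
        · right
          have : -z ∈ X := by
            by_contra h
            exact hzX (((hsel z hz).mpr h))
          exact ⟨-z, this, by rw [neg_neg]⟩
    have hX2 : 2 * X.ncard = (L m k m).ncard := by
      have := Set.ncard_union_eq hdisjX hXfin (hXfin.image _)
      rw [hunionX] at this
      omega
    omega
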